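/- arXiv:2407.09764 — 4 statements merged into one kernel-verified Lean document; each statement's English description precedes it below -/
import Mathlib

section
/- For every integer m ≥ 1 and every field F, the space of derivations of the Heisenberg Lie algebra h_m has dimension 2m² + 3m + 1 = (2m+1)(m+1) over F. -/
/-!
Write `z = e₂ₘ₊₁` and `ω` for the symplectic form on `e₁, …, e₂ₘ`, so that `z` is central and
`⁅eᵢ, eⱼ⁆ = ω(eᵢ, eⱼ) z`. Bracketing `D z` with the `eᵢ` shows that a derivation `D` maps `z` to
`c z` for a scalar `c`. On pairs involving `z` the Leibniz rule then holds automatically, and on a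
pair `eᵢ, eⱼ` it says exactly that `B(i, j) = ω(eᵢ, D eⱼ)` satisfies `B - Bᵀ = c ω`. Writing
`ω = N - Nᵀ`, a derivation is therefore a free choice of `c`, of the symmetric matrix `B - c N`
(`(2m+1)m` entries) and of the `z`-components of `D e₁, …, D e₂ₘ`.
-/

lemma LinearMap.apply_lie_eq_sub_of_basis {R L ι : Type*} [CommRing R] [LieRing L]
    [LieAlgebra R L] (b : Module.Basis ι R L) (f : L →ₗ[R] L)
    (h : ∀ i j, f ⁅b i, b j⁆ = ⁅b i, f (b j)⁆ - ⁅b j, f (b i)⁆) (x y : L) :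
    f ⁅x, y⁆ = ⁅x, f y⁆ - ⁅y, f x⁆ := by
  let bracket : L →ₗ[R] L →ₗ[R] L := LieModule.toEnd R L L
  have key : bracket.compr₂ f = bracket.compl₂ f - (bracket.compl₂ f).flip :=
    LinearMap.ext_basis b b fun i j => by simpa [bracket] using h i j
  simpa [bracket] using LinearMap.congr_fun₂ key x y

section UpperTriangle

variable {α β : Type*} [LinearOrder α]

def symmOfUpperTriangle (S : {q : α × α // q.1 ≤ q.2} → β) (i j : α) : β :=
  S ⟨(min i j, max i j), min_le_max⟩

lemma symmOfUpperTriangle_comm (S : {q : α × α // q.1 ≤ q.2} → β) (i j : α) :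
    symmOfUpperTriangle S i j = symmOfUpperTriangle S j i := by
  simp only [symmOfUpperTriangle, min_comm, max_comm]

lemma symmOfUpperTriangle_of_le (S : {q : α × α // q.1 ≤ q.2} → β) {i j : α} (h : i ≤ j) :
    symmOfUpperTriangle S i j = S ⟨(i, j), h⟩ := by
  simp only [symmOfUpperTriangle, min_eq_left h, max_eq_right h]

lemma card_upperTriangle [Fintype α] :
    Fintype.card {q : α × α // q.1 ≤ q.2} = (Fintype.card α + 1).choose 2 := by
  rw [← Fintype.card_congr Sym2.sortEquiv, Sym2.card]

end UpperTriangle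

namespace Heisenberg

variable {R : Type*} [CommRing R] {m : ℕ}

def partner (i : Fin (2 * m)) : Fin (2 * m) :=
  ⟨if (i : ℕ) < m then i + m else i - m, by split <;> omega⟩

variable (R) in
def sign (i : Fin (2 * m)) : R := if (i : ℕ) < m then 1 else -1

variable (R) in
/-- The symplectic form on `e₁, …, e₂ₘ` is `upperForm R i j - upperForm R j i`. -/
def upperForm (i j : Fin (2 * m)) : R := if (j : ℕ) = i + m ∧ (i : ℕ) < m then 1 else 0

@[simp] lemma partner_partner (i : Fin (2 * m)) : partner (partner i) = i := by
  ext; simp only [partner]; split_ifs <;> omega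

lemma sign_partner (i : Fin (2 * m)) : sign R (partner i) = -sign R i := by
  simp only [sign, partner]; split_ifs <;> first | omega | simp

@[simp] lemma sign_mul_self (i : Fin (2 * m)) : sign R i * sign R i = 1 := by
  simp only [sign]; split_ifs <;> simp

lemma upperForm_sub_upperForm (i j : Fin (2 * m)) :
    upperForm R i j - upperForm R j i = sign R i * if partner i = j then 1 else 0 := by
  simp only [upperForm, sign, partner, Fin.ext_iff]; split_ifs <;> first | omega | simp

variable {L : Type*} [LieRing L] [LieAlgebra R L]

def IsHeisenbergBasis (b : Module.Basis (Fin (2 * m + 1)) R L) : Prop :=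
  ∀ i j : Fin (2 * m + 1), ⁅b i, b j⁆ =
    if (j : ℕ) = (i : ℕ) + m ∧ (i : ℕ) < m then b (Fin.last (2 * m))
    else if (i : ℕ) = (j : ℕ) + m ∧ (j : ℕ) < m then -b (Fin.last (2 * m))
    else 0

variable {b : Module.Basis (Fin (2 * m + 1)) R L}

lemma last_lie (hb : IsHeisenbergBasis b) (x : L) : ⁅b (Fin.last (2 * m)), x⁆ = 0 := by
  suffices LieModule.toEnd R L L (b (Fin.last (2 * m))) = 0 by
    simpa using LinearMap.congr_fun this x
  refine b.ext fun k => ?_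
  rw [LieModule.toEnd_apply_apply, hb]
  simp only [Fin.val_last]
  split_ifs <;> first | omega | simp

lemma lie_last (hb : IsHeisenbergBasis b) (x : L) : ⁅x, b (Fin.last (2 * m))⁆ = 0 := by
  rw [← lie_skew, last_lie hb, neg_zero]

lemma castSucc_lie_castSucc (hb : IsHeisenbergBasis b) (i j : Fin (2 * m)) :
    ⁅b i.castSucc, b j.castSucc⁆ = (upperForm R i j - upperForm R j i) • b (Fin.last (2 * m)) := by
  rw [hb]
  simp only [upperForm, Fin.val_castSucc]
  split_ifs <;> first | omega | simp

lemma castSucc_lie (hb : IsHeisenbergBasis b) (i : Fin (2 * m)) (x : L) :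
    ⁅b i.castSucc, x⁆ = (sign R i * b.repr x (partner i).castSucc) • b (Fin.last (2 * m)) := by
  suffices LieModule.toEnd R L L (b i.castSucc) =
      (sign R i • b.coord (partner i).castSucc).smulRight (b (Fin.last (2 * m))) by
    simpa using LinearMap.congr_fun this x
  refine b.ext fun k => ?_
  induction k using Fin.lastCases with
  | last => simp [lie_last hb]
  | cast j =>
    simp [castSucc_lie_castSucc hb, upperForm_sub_upperForm, Finsupp.single_apply, eq_comm]

variable (b) in
/-- `formMatrix b f i j = ω(eᵢ, f eⱼ)` for the symplectic form `ω` of `castSucc_lie_castSucc`. -/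
noncomputable def formMatrix (f : L →ₗ[R] L) (i j : Fin (2 * m)) : R :=
  sign R i * b.repr (f (b j.castSucc)) (partner i).castSucc

lemma lie_apply_sub_lie_apply (hb : IsHeisenbergBasis b) (f : L →ₗ[R] L) (i j : Fin (2 * m)) :
    ⁅b i.castSucc, f (b j.castSucc)⁆ - ⁅b j.castSucc, f (b i.castSucc)⁆ =
      (formMatrix b f i j - formMatrix b f j i) • b (Fin.last (2 * m)) := by
  rw [castSucc_lie hb, castSucc_lie hb, sub_smul, formMatrix, formMatrix]

lemma apply_last (hb : IsHeisenbergBasis b) (D : LieDerivation R L L) :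
    D (b (Fin.last (2 * m))) = b.repr (D (b (Fin.last (2 * m)))) (Fin.last (2 * m)) •
      b (Fin.last (2 * m)) := by
  have hcoord (k : Fin (2 * m)) : b.repr (D (b (Fin.last (2 * m)))) k.castSucc = 0 := by
    have h := D.apply_lie_eq_add (b (partner k).castSucc) (b (Fin.last (2 * m)))
    rw [lie_last hb, lie_last hb, map_zero, add_zero, castSucc_lie hb, partner_partner,
      eq_comm, ← zero_smul R (b _)] at h
    have h' := congrArg (sign R (partner k) * ·) (b.linearIndependent.smul_left_injective _ h)
    simpa [← mul_assoc] using h'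
  conv_lhs => rw [← b.sum_repr (D (b (Fin.last (2 * m)))), Fin.sum_univ_castSucc]
  simp [hcoord]

lemma formMatrix_sub_formMatrix (hb : IsHeisenbergBasis b) (D : LieDerivation R L L)
    (i j : Fin (2 * m)) :
    formMatrix b D i j - formMatrix b D j i =
      b.repr (D (b (Fin.last (2 * m)))) (Fin.last (2 * m)) *
        (upperForm R i j - upperForm R j i) := by
  have h := D.apply_lie_eq_sub (b i.castSucc) (b j.castSucc)
  have h' := lie_apply_sub_lie_apply hb D i j
  simp only [LieDerivation.coeFn_coe] at h'
  rw [h', castSucc_lie_castSucc hb, map_smul, apply_last hb, smul_smul, mul_comm] at h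
  exact (b.linearIndependent.smul_left_injective _ h).symm

lemma apply_lie_basis_eq_sub_of_formMatrix (hb : IsHeisenbergBasis b) (f : L →ₗ[R] L) (c : R)
    (hz : f (b (Fin.last (2 * m))) = c • b (Fin.last (2 * m)))
    (hf : ∀ i j, formMatrix b f i j - formMatrix b f j i = c * (upperForm R i j - upperForm R j i))
    (k l : Fin (2 * m + 1)) :
    f ⁅b k, b l⁆ = ⁅b k, f (b l)⁆ - ⁅b l, f (b k)⁆ := by
  induction k using Fin.lastCases with
  | last => simp [last_lie hb, hz, lie_last hb]
  | cast i =>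
    induction l using Fin.lastCases with
    | last => simp [last_lie hb, hz, lie_last hb]
    | cast j =>
      rw [lie_apply_sub_lie_apply hb, hf, castSucc_lie_castSucc hb, map_smul, hz, smul_smul,
        mul_comm]

lemma eq_zero_of_formMatrix_eq_zero (f : L →ₗ[R] L) (hf : ∀ i j, formMatrix b f i j = 0)
    (hc : ∀ j : Fin (2 * m), b.repr (f (b j.castSucc)) (Fin.last (2 * m)) = 0)
    (hz : f (b (Fin.last (2 * m))) = 0) : f = 0 := by
  refine b.ext fun j => ?_
  induction j using Fin.lastCases with
  | last => exact hz
  | cast j =>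
    refine b.repr.injective (Finsupp.ext fun k => ?_)
    induction k using Fin.lastCases with
    | last => simpa using hc j
    | cast k => simpa [formMatrix, ← mul_assoc, sign_partner] using
        congrArg (sign R (partner k) * ·) (hf (partner k) j)

variable (R m) in
/-- A derivation `D` with `D z = c • z` is encoded by the upper triangle of the symmetric matrix
`formMatrix b D - c • upperForm R`, the `z`-coordinates of the `D eⱼ`, and `c`. -/
abbrev Params := ({q : Fin (2 * m) × Fin (2 * m) // q.1 ≤ q.2} → R) × (Fin (2 * m) → R) × R

variable (b) in
noncomputable def toParams : LieDerivation R L L →ₗ[R] Params R m where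
  toFun D :=
    (fun q => formMatrix b D q.1.1 q.1.2 -
        b.repr (D (b (Fin.last (2 * m)))) (Fin.last (2 * m)) * upperForm R q.1.1 q.1.2,
      fun j => b.repr (D (b j.castSucc)) (Fin.last (2 * m)),
      b.repr (D (b (Fin.last (2 * m)))) (Fin.last (2 * m)))
  map_add' D D' := by
    ext <;> simp [formMatrix]
    ring
  map_smul' c D := by
    ext <;> simp [formMatrix]
    ring

lemma toParams_injective (hb : IsHeisenbergBasis b) : Function.Injective (toParams b) := by
  refine (injective_iff_map_eq_zero _).mpr fun D hD => ?_
  simp only [toParams, LinearMap.coe_mk, AddHom.coe_mk, Prod.mk_eq_zero, funext_iff] at hD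
  obtain ⟨hS, hc, hz⟩ := hD
  simp only [hz, zero_mul, sub_zero] at hS
  have hsymm (i j) : formMatrix b D i j = formMatrix b D j i := by
    simpa [hz, sub_eq_zero] using formMatrix_sub_formMatrix hb D i j
  have hf (i j) : formMatrix b D i j = 0 := by
    rcases le_total i j with h | h
    · exact hS ⟨(i, j), h⟩
    · rw [hsymm]; exact hS ⟨(j, i), h⟩
  have h0 := eq_zero_of_formMatrix_eq_zero (D : L →ₗ[R] L) hf hc
    (by rw [LieDerivation.coeFn_coe, apply_last hb, hz, zero_smul])
  ext x
  simpa using LinearMap.congr_fun h0 x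

def paramsForm (p : Params R m) (i j : Fin (2 * m)) : R :=
  symmOfUpperTriangle p.1 i j + p.2.2 * upperForm R i j

variable (b) in
/-- Inverts `formMatrix`, using `sign R k * sign R k = 1`. -/
noncomputable def paramsLinearMap (p : Params R m) : L →ₗ[R] L :=
  b.constr R <| Fin.lastCases (p.2.2 • b (Fin.last (2 * m))) fun j =>
    ∑ k, (sign R (partner k) * paramsForm p (partner k) j) • b k.castSucc +
      p.2.1 j • b (Fin.last (2 * m))

lemma paramsLinearMap_last (p : Params R m) :
    paramsLinearMap b p (b (Fin.last (2 * m))) = p.2.2 • b (Fin.last (2 * m)) := by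
  simp [paramsLinearMap]

lemma repr_paramsLinearMap_last (p : Params R m) (j : Fin (2 * m)) :
    b.repr (paramsLinearMap b p (b j.castSucc)) (Fin.last (2 * m)) = p.2.1 j := by
  simp [paramsLinearMap]

lemma formMatrix_paramsLinearMap (p : Params R m) (i j : Fin (2 * m)) :
    formMatrix b (paramsLinearMap b p) i j = paramsForm p i j := by
  simp [formMatrix, paramsLinearMap, Finsupp.single_apply, ← mul_assoc]

lemma paramsForm_sub_paramsForm (p : Params R m) (i j : Fin (2 * m)) :
    paramsForm p i j - paramsForm p j i = p.2.2 * (upperForm R i j - upperForm R j i) := by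
  rw [paramsForm, paramsForm, symmOfUpperTriangle_comm]
  ring

variable (b) in
noncomputable def ofParams (hb : IsHeisenbergBasis b) (p : Params R m) : LieDerivation R L L where
  __ := paramsLinearMap b p
  leibniz' := LinearMap.apply_lie_eq_sub_of_basis b _ <|
    apply_lie_basis_eq_sub_of_formMatrix hb _ p.2.2 (paramsLinearMap_last p) fun i j => by
      simp only [formMatrix_paramsLinearMap, paramsForm_sub_paramsForm]

lemma toParams_ofParams (hb : IsHeisenbergBasis b) (p : Params R m) :
    toParams b (ofParams b hb p) = p := by
  have hz : ofParams b hb p (b (Fin.last (2 * m))) = p.2.2 • b (Fin.last (2 * m)) :=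
    paramsLinearMap_last p
  refine Prod.ext (funext fun ⟨⟨i, j⟩, hij⟩ => ?_) (Prod.ext (funext fun j => ?_) ?_)
  · have hf : formMatrix b (ofParams b hb p) i j = paramsForm p i j :=
      formMatrix_paramsLinearMap p i j
    simp [toParams, hz, hf, paramsForm, symmOfUpperTriangle_of_le _ hij]
  · exact repr_paramsLinearMap_last p _
  · simp [toParams, hz]

theorem finrank_lieDerivation [Nontrivial R] (hb : IsHeisenbergBasis b) :
    Module.finrank R (LieDerivation R L L) = 2 * m ^ 2 + 3 * m + 1 := by
  have e := LinearEquiv.ofBijective (toParams b)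
    ⟨toParams_injective hb, fun p => ⟨ofParams b hb p, toParams_ofParams hb p⟩⟩
  rw [e.finrank_eq, Module.finrank_prod, Module.finrank_prod, Module.finrank_pi,
    Module.finrank_pi, Module.finrank_self, card_upperTriangle, Fintype.card_fin]
  have : (2 * m + 1).choose 2 = (2 * m + 1) * m := by
    rw [Nat.choose_two_right, add_tsub_cancel_right, ← mul_assoc, mul_comm _ 2, mul_assoc,
      Nat.mul_div_cancel_left _ two_pos]
  rw [this]
  ring

end Heisenberg

theorem heisenberg_derivations_dim_general
    (F : Type*) [Field F] (m : ℕ)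
    (L : Type*) [LieRing L] [LieAlgebra F L]
    (b : Module.Basis (Fin (2*m+1)) F L)
    (hb : ∀ i j : Fin (2*m+1), ⁅b i, b j⁆ =
      if (j : ℕ) = (i : ℕ) + m ∧ (i : ℕ) < m then b (Fin.last (2*m))
      else if (i : ℕ) = (j : ℕ) + m ∧ (j : ℕ) < m then - b (Fin.last (2*m))
      else 0) :
    Module.finrank F (LieDerivation F L L) = 2*m^2 + 3*m + 1 ∧
    2*m^2 + 3*m + 1 = (2*m+1)*(m+1) :=
  ⟨Heisenberg.finrank_lieDerivation hb, by ring⟩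

/-- For every integer `m ≥ 1` and every field `F`, the space of derivations
of the Heisenberg Lie algebra `h_m` has dimension `2m² + 3m + 1 = (2m+1)(m+1)` over `F`. -/
theorem heisenberg_derivations_dim
    (F : Type*) [Field F] (m : ℕ) (hm : 1 ≤ m)
    (L : Type*) [LieRing L] [LieAlgebra F L]
    (b : Module.Basis (Fin (2*m+1)) F L)
    (hb : ∀ i j : Fin (2*m+1), ⁅b i, b j⁆ =
      if (j : ℕ) = (i : ℕ) + m ∧ (i : ℕ) < m then b (Fin.last (2*m))
      else if (i : ℕ) = (j : ℕ) + m ∧ (j : ℕ) < m then - b (Fin.last (2*m))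
      else 0) :
    Module.finrank F (LieDerivation F L L) = 2*m^2 + 3*m + 1 ∧
    2*m^2 + 3*m + 1 = (2*m+1)*(m+1) :=
  heisenberg_derivations_dim_general F m L b hb
end

section
/- Let F be an algebraically closed field of characteristic p > 2, let m ≥ 1, and let λ = (λ_1, …, λ_{2m+1}) ∈ F^{2m+1}. Consider the subspace D_λ of derivations ψ of h_m satisfying ψ(g^{[p]}) = [⋯[[ψ(g),g],g],…,g] ((p−1)-fold right bracketing with g) for all g ∈ h_m; this subspace contains all inner derivations. Then the quotient space D_λ / Inn(h_m) (which is the restricted cohomology H¹_*(h_m^λ, h_m^λ)) has dimension 2m² + m + 1 if λ = 0, and dimension 2m² + m if λ ≠ 0. -/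
/-!
Write `z` for the central basis vector and `ω` for the structure matrix, `⁅e_s, e_t⁆ = ω s t • z`.
As `h_m` is two-step nilpotent and `p - 1 ≥ 2`, the right-hand side of the restricted condition
vanishes, while `ψ (g^[p]) = (∑ aᵢ^p λᵢ) • μ • z` where `ψ z = μ • z`. So `D_λ` is the whole of
`Der h_m` when `λ = 0`, and the hyperplane `μ = 0` otherwise.

A derivation is determined by `μ`, its linear part `M` on the span of the `e_s` and its central
part `f`, subject only to `ωM - (ωM)ᵀ = μω`. Since `ω` is invertible, for `μ = 0` the matrix `ωM`
is an arbitrary symmetric matrix, so with `n = 2m` the derivations with `μ = 0` form a space of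
dimension `n(n+1)/2 + n`; `μ` is onto, and the inner derivations have dimension `n` because the
centre is `F z`.
-/

open Matrix Module

section SymmetricMatrices

variable (ι R : Type*) [CommRing R]

def symmetricMatrices : Submodule R (Matrix ι ι R) where
  carrier := {A | A.IsSymm}
  add_mem' := IsSymm.add
  zero_mem' := isSymm_zero
  smul_mem' r _ h := h.smul r

def symmetricMatricesEquivSym2 : symmetricMatrices ι R ≃ₗ[R] (Sym2 ι → R) where
  toFun A := Sym2.lift ⟨fun i j => (A : Matrix ι ι R) i j, fun i j => (A.2.apply i j).symm⟩
  invFun g := ⟨of fun i j => g s(i, j), by ext i j; simp [Sym2.eq_swap]⟩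
  map_add' A B := by ext z; induction z using Sym2.ind; simp
  map_smul' r A := by ext z; induction z using Sym2.ind; simp
  left_inv A := by ext i j; simp
  right_inv g := by ext z; induction z using Sym2.ind; simp

lemma finrank_symmetricMatrices [Fintype ι] [StrongRankCondition R] :
    finrank R (symmetricMatrices ι R) = Fintype.card (Sym2 ι) := by
  rw [(symmetricMatricesEquivSym2 ι R).finrank_eq, finrank_fintype_fun_eq_card]

end SymmetricMatrices

/-- The witness is the part of `A` strictly above the diagonal for some well-order on `ι`. -/
lemma Matrix.exists_sub_transpose_eq {R ι : Type*} [CommRing R] {A : Matrix ι ι R}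
    (hdiag : ∀ i, A i i = 0) (hskew : Aᵀ = -A) : ∃ N : Matrix ι ι R, N - Nᵀ = A := by
  classical
  refine ⟨of fun i j => if WellOrderingRel i j then A i j else 0, ?_⟩
  ext i j
  have hji : A j i = -A i j := congr_fun₂ hskew i j
  rcases trichotomous_of WellOrderingRel i j with h | rfl | h
  · simp [h, asymm h]
  · simp [hdiag]
  · simp [h, asymm h, hji]

lemma Matrix.dotProduct_mulVec_sub_swap {R ι : Type*} [CommRing R] [Fintype ι]
    (A : Matrix ι ι R) (x y : ι → R) :
    x ⬝ᵥ A *ᵥ y - y ⬝ᵥ A *ᵥ x = x ⬝ᵥ (A - Aᵀ) *ᵥ y := by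
  rw [sub_mulVec, dotProduct_sub, mulVec_transpose, dotProduct_mulVec y, dotProduct_comm _ x]

lemma Submodule.finrank_quotient_comap_subtype_add_finrank {K V : Type*} [DivisionRing K]
    [AddCommGroup V] [Module K V] [FiniteDimensional K V] {N M : Submodule K V} (h : N ≤ M) :
    finrank K (M ⧸ N.comap M.subtype) + finrank K N = finrank K M := by
  rw [← (Submodule.comapSubtypeEquivOfLe h).finrank_eq]
  exact Submodule.finrank_quotient_add_finrank _

section CommRing

variable {R L ι : Type*} [CommRing R] [LieRing L] [LieAlgebra R L]

namespace Module.Basis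

variable (c : Basis (Option ι) R L)

noncomputable def coordSome : L →ₗ[R] ι → R :=
  LinearMap.pi fun s => c.coord (some s)

@[simp] lemma coordSome_apply (u : L) (s : ι) : c.coordSome u s = c.repr u (some s) := rfl

lemma coordSome_none : c.coordSome (c none) = 0 := by
  ext s; simp

lemma coordSome_some [DecidableEq ι] (s : ι) : c.coordSome (c (some s)) = Pi.single s 1 := by
  ext t; simp [Finsupp.single_apply, Pi.single_apply, eq_comm]

lemma ext_coordSome {u v : L} (h : c.coordSome u = c.coordSome v)
    (hnone : c.repr u none = c.repr v none) : u = v := by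
  refine c.repr.injective (Finsupp.ext fun k => ?_)
  cases k with
  | none => exact hnone
  | some s => exact congr_fun h s

lemma mem_span_none_iff {u : L} : u ∈ R ∙ c none ↔ c.coordSome u = 0 := by
  refine ⟨fun h => ?_, fun h => Submodule.mem_span_singleton.2 ⟨c.repr u none, ?_⟩⟩
  · obtain ⟨a, rfl⟩ := Submodule.mem_span_singleton.1 h
    rw [map_smul, c.coordSome_none, smul_zero]
  · exact c.ext_coordSome (by rw [map_smul, c.coordSome_none, smul_zero, h]) (by simp)

end Module.Basis

structure IsHeisenbergBasis (c : Basis (Option ι) R L) (ω : Matrix ι ι R) : Prop where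
  lie_some_some (s t : ι) : ⁅c (some s), c (some t)⁆ = ω s t • c none
  lie_none (k : Option ι) : ⁅c none, c k⁆ = 0

namespace IsHeisenbergBasis

variable [Fintype ι] {c : Basis (Option ι) R L} {ω : Matrix ι ι R} (hc : IsHeisenbergBasis c ω)
include hc

lemma lie_eq (u v : L) : ⁅u, v⁆ = (c.coordSome u ⬝ᵥ ω *ᵥ c.coordSome v) • c none := by
  have hnone : ∀ k, ⁅c k, c none⁆ = 0 := fun k => by rw [← lie_skew, hc.lie_none, neg_zero]
  conv_lhs => rw [← c.sum_repr u, ← c.sum_repr v]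
  simp only [Fintype.sum_option, add_lie, lie_add, sum_lie, lie_sum, smul_lie, lie_smul,
    hc.lie_none, hnone, hc.lie_some_some, smul_zero, Finset.sum_const_zero, zero_add, smul_smul,
    ← Finset.sum_smul, dotProduct, mulVec, Finset.mul_sum, c.coordSome_apply]
  rw [Finset.sum_comm]
  congr 1
  exact Finset.sum_congr rfl fun s _ => Finset.sum_congr rfl fun t _ => by ring

lemma lie_none_left (u : L) : ⁅c none, u⁆ = 0 := by
  rw [hc.lie_eq, c.coordSome_none, zero_dotProduct, zero_smul]

lemma lie_none_right (u : L) : ⁅u, c none⁆ = 0 := by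
  rw [hc.lie_eq, c.coordSome_none, mulVec_zero, dotProduct_zero, zero_smul]

lemma lie_lie (u v w : L) : ⁅⁅u, v⁆, w⁆ = 0 := by
  rw [hc.lie_eq u v, smul_lie, hc.lie_none_left, smul_zero]

lemma iterate_lie_eq_zero {k : ℕ} (hk : 2 ≤ k) (g x : L) : (fun y => ⁅y, g⁆)^[k] x = 0 := by
  obtain ⟨j, rfl⟩ := Nat.exists_eq_add_of_le' hk
  rw [Function.iterate_add_apply, show (fun y => ⁅y, g⁆)^[2] x = 0 from hc.lie_lie x g g]
  exact Function.iterate_fixed (f := fun y => ⁅y, g⁆) (zero_lie g) j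

end IsHeisenbergBasis

end CommRing

section Field

variable {F L ι : Type*} [Field F] [LieRing L] [LieAlgebra F L]

namespace Module.Basis

variable [Fintype ι] (c : Basis (Option ι) F L)

/-! For a derivation `ψ`, `ψ (c none) = μ • c none` (see `IsHeisenbergBasis.apply_none`) and
`ψ (c (some t)) = ∑ r, M r t • c (some r) + f t • c none`, where `μ = c.centerScalar ψ`,
`M = c.derivMatrix ψ` and `f = c.derivCentralPart ψ`. -/

noncomputable def centerScalar : LieDerivation F L L →ₗ[F] F where
  toFun ψ := c.repr (ψ (c none)) none
  map_add' _ _ := by simp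
  map_smul' _ _ := by simp

noncomputable def derivMatrix : LieDerivation F L L →ₗ[F] Matrix ι ι F where
  toFun ψ := of fun r t => c.repr (ψ (c (some t))) (some r)
  map_add' _ _ := by ext; simp
  map_smul' _ _ := by ext; simp

noncomputable def derivCentralPart : LieDerivation F L L →ₗ[F] ι → F where
  toFun ψ t := c.repr (ψ (c (some t))) none
  map_add' _ _ := by ext; simp
  map_smul' _ _ := by ext; simp

variable [DecidableEq ι]

noncomputable def endOfCoords (M : Matrix ι ι F) (μ : F) (f : ι → F) : L →ₗ[F] L :=
  c.constr F fun k => k.elim (μ • c none) fun t => ∑ r, M r t • c (some r) + f t • c none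

variable (M : Matrix ι ι F) (μ : F) (f : ι → F)

@[simp] lemma endOfCoords_none : c.endOfCoords M μ f (c none) = μ • c none := by
  simp [endOfCoords]

@[simp] lemma endOfCoords_some (t : ι) :
    c.endOfCoords M μ f (c (some t)) = ∑ r, M r t • c (some r) + f t • c none := by
  simp [endOfCoords]

lemma coordSome_endOfCoords (u : L) :
    c.coordSome (c.endOfCoords M μ f u) = M *ᵥ c.coordSome u := by
  suffices c.coordSome ∘ₗ c.endOfCoords M μ f = M.mulVecLin ∘ₗ c.coordSome from
    LinearMap.congr_fun this u
  refine c.ext fun k => ?_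
  cases k with
  | none => simp [c.coordSome_none]
  | some t => ext r; simp [c.coordSome_some, Finsupp.single_apply]

end Module.Basis

namespace IsHeisenbergBasis

variable {c : Basis (Option ι) F L} {ω : Matrix ι ι F} (hc : IsHeisenbergBasis c ω)
include hc

lemma diag_eq_zero (s : ι) : ω s s = 0 := by
  have h := hc.lie_some_some s s
  rw [lie_self, eq_comm, smul_eq_zero] at h
  exact h.resolve_right (c.ne_zero none)

lemma transpose_eq_neg : ωᵀ = -ω := by
  ext s t
  have h := hc.lie_some_some t s
  rw [← lie_skew, hc.lie_some_some, ← neg_smul] at h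
  exact smul_left_injective F (c.ne_zero none) h.symm

variable [Fintype ι]

lemma range_ad_le_ker_centerScalar :
    LinearMap.range (LieDerivation.ad F L : L →ₗ[F] LieDerivation F L L) ≤
      LinearMap.ker c.centerScalar := by
  rintro _ ⟨h, rfl⟩
  simp [Basis.centerScalar, hc.lie_none_right]

section mkDerivation

variable [DecidableEq ι] (M : Matrix ι ι F) (μ : F) (f : ι → F) (h : ω * M - (ω * M)ᵀ = μ • ω)

noncomputable def mkDerivation : LieDerivation F L L where
  toLinearMap := c.endOfCoords M μ f
  leibniz' u v := by
    rw [hc.lie_eq u v, map_smul, c.endOfCoords_none, hc.lie_eq u, hc.lie_eq v,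
      c.coordSome_endOfCoords, c.coordSome_endOfCoords, ← sub_smul, smul_smul, mulVec_mulVec,
      mulVec_mulVec, dotProduct_mulVec_sub_swap, h, smul_mulVec, dotProduct_smul, smul_eq_mul,
      mul_comm]

@[simp] lemma centerScalar_mkDerivation : c.centerScalar (hc.mkDerivation M μ f h) = μ := by
  simp [Basis.centerScalar, mkDerivation]

@[simp] lemma derivMatrix_mkDerivation : c.derivMatrix (hc.mkDerivation M μ f h) = M := by
  ext r t; simp [Basis.derivMatrix, mkDerivation, Finsupp.single_apply]

@[simp] lemma derivCentralPart_mkDerivation :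
    c.derivCentralPart (hc.mkDerivation M μ f h) = f := by
  ext t; simp [Basis.derivCentralPart, mkDerivation]

end mkDerivation

variable [DecidableEq ι] (hω : IsUnit ω)
include hω

lemma forall_lie_eq_zero_iff {u : L} : (∀ v : L, ⁅u, v⁆ = 0) ↔ u ∈ F ∙ c none := by
  refine ⟨fun h => c.mem_span_none_iff.2 ?_, fun h v => ?_⟩
  · refine vecMul_injective_of_isUnit hω (funext fun t => ?_)
    have hut := h (c (some t))
    rw [hc.lie_eq, c.coordSome_some, dotProduct_mulVec, dotProduct_single_one,
      smul_eq_zero] at hut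
    simpa using hut.resolve_right (c.ne_zero none)
  · obtain ⟨a, rfl⟩ := Submodule.mem_span_singleton.1 h
    rw [smul_lie, hc.lie_none_left, smul_zero]

variable (ψ : LieDerivation F L L)

lemma apply_none : ψ (c none) = c.centerScalar ψ • c none := by
  have hcentral : ψ (c none) ∈ F ∙ c none := by
    refine (hc.forall_lie_eq_zero_iff hω).1 fun v => ?_
    have h := ψ.apply_lie_eq_sub (c none) v
    rw [hc.lie_none_left, hc.lie_none_left, map_zero, zero_sub, eq_comm, neg_eq_zero] at h
    rw [← lie_skew, h, neg_zero]
  exact c.ext_coordSome (by rw [map_smul, c.coordSome_none, smul_zero,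
    ← c.mem_span_none_iff.1 hcentral]) (by simp [Basis.centerScalar])

lemma coordSome_apply (u : L) : c.coordSome (ψ u) = c.derivMatrix ψ *ᵥ c.coordSome u := by
  suffices c.coordSome ∘ₗ ψ.toLinearMap = (c.derivMatrix ψ).mulVecLin ∘ₗ c.coordSome from
    LinearMap.congr_fun this u
  refine c.ext fun k => ?_
  cases k with
  | none => simp [hc.apply_none hω, c.coordSome_none]
  | some t => ext r; simp [c.coordSome_some, Basis.derivMatrix]

lemma derivMatrix_sub_transpose :
    ω * c.derivMatrix ψ - (ω * c.derivMatrix ψ)ᵀ = c.centerScalar ψ • ω := by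
  ext s t
  have h := ψ.apply_lie_eq_sub (c (some s)) (c (some t))
  rw [hc.lie_some_some, map_smul, hc.apply_none hω, hc.lie_eq, hc.lie_eq,
    hc.coordSome_apply hω, hc.coordSome_apply hω, c.coordSome_some, c.coordSome_some,
    ← sub_smul, smul_smul] at h
  have h' := smul_left_injective F (c.ne_zero none) h
  rw [mulVec_mulVec, mulVec_mulVec, single_one_dotProduct, single_one_dotProduct,
    mulVec_single_one, mulVec_single_one] at h'
  rw [Matrix.sub_apply, transpose_apply, Matrix.smul_apply, smul_eq_mul, mul_comm, h']
  rfl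

omit ψ in
lemma derivation_ext {ψ φ : LieDerivation F L L} (hμ : c.centerScalar ψ = c.centerScalar φ)
    (hM : c.derivMatrix ψ = c.derivMatrix φ) (hf : c.derivCentralPart ψ = c.derivCentralPart φ) :
    ψ = φ := by
  suffices ψ.toLinearMap = φ.toLinearMap from LieDerivation.ext (LinearMap.congr_fun this)
  refine c.ext fun k => ?_
  cases k with
  | none => simp [hc.apply_none hω, hμ]
  | some t =>
    refine c.ext_coordSome ?_ (congr_fun hf t)
    simp [hc.coordSome_apply hω, hM]

noncomputable def kerCenterScalarCoords :
    LinearMap.ker c.centerScalar →ₗ[F] symmetricMatrices ι F × (ι → F) where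
  toFun ψ := (⟨ω * c.derivMatrix ψ, by
      have h := hc.derivMatrix_sub_transpose hω ψ
      rw [LinearMap.mem_ker.1 ψ.2, zero_smul, sub_eq_zero] at h
      exact h.symm⟩, c.derivCentralPart ψ)
  map_add' ψ φ := by ext <;> simp [Matrix.mul_add]
  map_smul' a ψ := by ext <;> simp

lemma kerCenterScalarCoords_bijective : Function.Bijective (hc.kerCenterScalarCoords hω) := by
  refine ⟨(injective_iff_map_eq_zero _).2 fun ψ hψ => Subtype.ext ?_, ?_⟩
  · simp only [kerCenterScalarCoords, LinearMap.coe_mk, AddHom.coe_mk, Prod.mk_eq_zero,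
      Subtype.ext_iff, ZeroMemClass.coe_zero] at hψ
    exact hc.derivation_ext hω (by simp)
      (by simpa using hω.mul_left_cancel (hψ.1.trans (mul_zero ω).symm)) (by simpa using hψ.2)
  · rintro ⟨⟨S, hS⟩, f⟩
    have hS' : ω * (ω⁻¹ * S) = S :=
      mul_nonsing_inv_cancel_left ω S ((isUnit_iff_isUnit_det ω).1 hω)
    have h : ω * (ω⁻¹ * S) - (ω * (ω⁻¹ * S))ᵀ = (0 : F) • ω := by
      rw [hS', zero_smul, hS.eq, sub_self]
    exact ⟨⟨hc.mkDerivation (ω⁻¹ * S) 0 f h, by simp⟩, by simp [kerCenterScalarCoords, hS']⟩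

lemma finrank_ker_centerScalar :
    finrank F (LinearMap.ker c.centerScalar) = Fintype.card (Sym2 ι) + Fintype.card ι := by
  rw [(LinearEquiv.ofBijective _ (hc.kerCenterScalarCoords_bijective hω)).finrank_eq,
    finrank_prod, finrank_symmetricMatrices, finrank_fintype_fun_eq_card]

lemma centerScalar_surjective : Function.Surjective c.centerScalar := by
  obtain ⟨N, hN⟩ := exists_sub_transpose_eq hc.diag_eq_zero hc.transpose_eq_neg
  have h : ω * (ω⁻¹ * N) - (ω * (ω⁻¹ * N))ᵀ = (1 : F) • ω := by
    rw [mul_nonsing_inv_cancel_left ω N ((isUnit_iff_isUnit_det ω).1 hω), hN, one_smul]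
  exact fun x => ⟨x • hc.mkDerivation (ω⁻¹ * N) 1 0 h, by simp⟩

lemma finrank_lieDerivation :
    finrank F (LieDerivation F L L) = Fintype.card (Sym2 ι) + Fintype.card ι + 1 := by
  have := Module.Finite.of_basis c
  have h := c.centerScalar.finrank_range_add_finrank_ker
  rw [LinearMap.range_eq_top.2 (hc.centerScalar_surjective hω), finrank_top, finrank_self,
    hc.finrank_ker_centerScalar hω] at h
  omega

lemma finrank_range_ad :
    finrank F (LinearMap.range (LieDerivation.ad F L : L →ₗ[F] LieDerivation F L L)) =
      Fintype.card ι := by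
  have := Module.Finite.of_basis c
  have hker : LinearMap.ker (LieDerivation.ad F L : L →ₗ[F] LieDerivation F L L) =
      F ∙ c none := by
    ext h
    rw [LinearMap.mem_ker, ← hc.forall_lie_eq_zero_iff hω, LieDerivation.ext_iff]
    simp
  have h := (LieDerivation.ad F L : L →ₗ[F] LieDerivation F L L).finrank_range_add_finrank_ker
  rw [hker, finrank_span_singleton (c.ne_zero none), finrank_eq_card_basis c,
    Fintype.card_option] at h
  omega

lemma finrank_top_quotient_range_ad :
    finrank F ((⊤ : Submodule F (LieDerivation F L L)) ⧸
      (LinearMap.range (LieDerivation.ad F L : L →ₗ[F] LieDerivation F L L)).comap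
        (⊤ : Submodule F (LieDerivation F L L)).subtype) = Fintype.card (Sym2 ι) + 1 := by
  have := Module.Finite.of_basis c
  have h := Submodule.finrank_quotient_comap_subtype_add_finrank (le_top (a :=
    LinearMap.range (LieDerivation.ad F L : L →ₗ[F] LieDerivation F L L)))
  rw [finrank_top, hc.finrank_lieDerivation hω, hc.finrank_range_ad hω] at h
  omega

lemma finrank_ker_centerScalar_quotient_range_ad :
    finrank F (LinearMap.ker c.centerScalar ⧸
      (LinearMap.range (LieDerivation.ad F L : L →ₗ[F] LieDerivation F L L)).comap
        (LinearMap.ker c.centerScalar).subtype) = Fintype.card (Sym2 ι) := by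
  have := Module.Finite.of_basis c
  have h := Submodule.finrank_quotient_comap_subtype_add_finrank hc.range_ad_le_ker_centerScalar
  rw [hc.finrank_ker_centerScalar hω, hc.finrank_range_ad hω] at h
  omega

end IsHeisenbergBasis

end Field

/-- `e_{a+1} ↦ some (inl a)`, `e_{m+a+1} ↦ some (inr a)`, `e_{2m+1} ↦ none`. -/
def heisenbergIndexEquiv (m : ℕ) : Option (Fin m ⊕ Fin m) ≃ Fin (2 * m + 1) :=
  (Equiv.optionCongr (finSumFinEquiv.trans (finCongr (two_mul m).symm))).trans
    finSuccEquivLast.symm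

lemma card_sym2_fin_sum_fin (m : ℕ) : Fintype.card (Sym2 (Fin m ⊕ Fin m)) = 2 * m ^ 2 + m := by
  rw [Sym2.card, Fintype.card_sum, Fintype.card_fin, Nat.choose_two_right, Nat.add_sub_cancel,
    show (m + m + 1) * (m + m) = 2 * (2 * m ^ 2 + m) by ring, Nat.mul_div_cancel_left _ two_pos]

lemma isHeisenbergBasis_reindex {F L : Type*} [Field F] [LieRing L] [LieAlgebra F L] {m : ℕ}
    (b : Basis (Fin (2 * m + 1)) F L)
    (hb : ∀ i j : Fin (2 * m + 1), ⁅b i, b j⁆ =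
      if (j : ℕ) = (i : ℕ) + m ∧ (i : ℕ) < m then b (Fin.last (2 * m))
      else if (i : ℕ) = (j : ℕ) + m ∧ (j : ℕ) < m then - b (Fin.last (2 * m))
      else 0) :
    IsHeisenbergBasis (b.reindex (heisenbergIndexEquiv m).symm) (-J (Fin m) F) where
  lie_some_some s t := by
    rcases s with a | a <;> rcases t with a' | a' <;>
      simp [heisenbergIndexEquiv, hb, J, Matrix.one_apply, Fin.ext_iff] <;>
      split_ifs <;> first | rfl | omega | simp_all
  lie_none k := by
    rcases k with _ | a | a <;> simp [heisenbergIndexEquiv, hb]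
    · rw [if_neg (by omega), if_neg (by omega)]
    · omega

theorem heisenberg_restricted_H1_dim_p_gt_two_general
    (F : Type*) [Field F] (p : ℕ) (hp2 : 2 < p)
    (m : ℕ)
    (L : Type*) [LieRing L] [LieAlgebra F L]
    (b : Module.Basis (Fin (2*m+1)) F L)
    (hb : ∀ i j : Fin (2*m+1), ⁅b i, b j⁆ =
      if (j : ℕ) = (i : ℕ) + m ∧ (i : ℕ) < m then b (Fin.last (2*m))
      else if (i : ℕ) = (j : ℕ) + m ∧ (j : ℕ) < m then - b (Fin.last (2*m))
      else 0)
    (lam : Fin (2*m+1) → F)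
    (P : L → L)
    (hP : ∀ g : L, P g = (∑ i, (b.repr g i)^p * lam i) • b (Fin.last (2*m)))
    (Dlam : Submodule F (LieDerivation F L L))
    (hD : ∀ ψ : LieDerivation F L L, ψ ∈ Dlam ↔
      ∀ g : L, ψ (P g) = (fun x => ⁅x, g⁆)^[p-1] (ψ g))
    (Inn : Submodule F (LieDerivation F L L))
    (hInn : ∀ D : LieDerivation F L L, D ∈ Inn ↔ ∃ h : L, ∀ g : L, D g = ⁅h, g⁆) :
    Inn ≤ Dlam ∧
    (lam = 0 →
      Module.finrank F (↥Dlam ⧸ Submodule.comap Dlam.subtype Inn) = 2*m^2 + m + 1) ∧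
    (lam ≠ 0 →
      Module.finrank F (↥Dlam ⧸ Submodule.comap Dlam.subtype Inn) = 2*m^2 + m) := by
  set c := b.reindex (heisenbergIndexEquiv m).symm
  have hc : IsHeisenbergBasis c (-J (Fin m) F) := isHeisenbergBasis_reindex b hb
  have hω : IsUnit (-J (Fin m) F) := ((isUnit_iff_isUnit_det _).2 (isUnit_det_J (Fin m) F)).neg
  have hz : b (Fin.last (2 * m)) = c none := by simp [c, heisenbergIndexEquiv]
  have hDlam (ψ : LieDerivation F L L) :
      ψ ∈ Dlam ↔ ∀ g, (∑ i, b.repr g i ^ p * lam i) * c.centerScalar ψ = 0 := by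
    refine (hD ψ).trans (forall_congr' fun g => ?_)
    rw [hc.iterate_lie_eq_zero (by omega), hP, hz, map_smul, hc.apply_none hω, smul_smul,
      smul_eq_zero_iff_left (c.ne_zero none)]
  have hInn : Inn = LinearMap.range (LieDerivation.ad F L : L →ₗ[F] LieDerivation F L L) := by
    ext D
    simp [hInn, LieDerivation.ext_iff, eq_comm]
  have hker : LinearMap.ker c.centerScalar ≤ Dlam := fun ψ hψ =>
    (hDlam ψ).2 fun g => by rw [LinearMap.mem_ker.1 hψ, mul_zero]
  refine ⟨hInn ▸ hc.range_ad_le_ker_centerScalar.trans hker, fun hlam => ?_, fun hlam => ?_⟩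
  · rw [Submodule.eq_top_iff'.2 fun ψ => (hDlam ψ).2 fun g => by simp [hlam], hInn,
      hc.finrank_top_quotient_range_ad hω, card_sym2_fin_sum_fin]
  · obtain ⟨i₀, hi₀⟩ := Function.ne_iff.1 hlam
    have hDlamKer : Dlam = LinearMap.ker c.centerScalar := by
      refine le_antisymm (fun ψ hψ => ?_) hker
      have h := (hDlam ψ).1 hψ (b i₀)
      simp [Finsupp.single_apply, zero_pow (by omega : p ≠ 0)] at h
      exact LinearMap.mem_ker.2 (h.resolve_left hi₀)
    rw [hDlamKer, hInn, hc.finrank_ker_centerScalar_quotient_range_ad hω, card_sym2_fin_sum_fin]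

/-- Let `F` be an algebraically closed field of characteristic `p > 2`, let
`m ≥ 1`, and let `λ ∈ F^{2m+1}`.  The restricted `[p]`-map on `h_m` determined by `λ` is
`g^{[p]} = (Σ_i a_i^p λ_i) e_{2m+1}` for `g = Σ_i a_i e_i`.  Consider the subspace `D_λ` of
derivations `ψ` of `h_m` satisfying `ψ(g^{[p]}) = [⋯[[ψ(g),g],g],…,g]` ((p−1)-fold right
bracketing with `g`) for all `g`; this subspace contains all inner derivations.  Then
`D_λ / Inn(h_m) = H¹_*(h_m^λ, h_m^λ)` has dimension `2m² + m + 1` if `λ = 0`, and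
dimension `2m² + m` if `λ ≠ 0`. -/
theorem heisenberg_restricted_H1_dim_p_gt_two
    (F : Type*) [Field F] [IsAlgClosed F] (p : ℕ) [CharP F p] (hp : p.Prime) (hp2 : 2 < p)
    (m : ℕ) (hm : 1 ≤ m)
    (L : Type*) [LieRing L] [LieAlgebra F L]
    (b : Module.Basis (Fin (2*m+1)) F L)
    (hb : ∀ i j : Fin (2*m+1), ⁅b i, b j⁆ =
      if (j : ℕ) = (i : ℕ) + m ∧ (i : ℕ) < m then b (Fin.last (2*m))
      else if (i : ℕ) = (j : ℕ) + m ∧ (j : ℕ) < m then - b (Fin.last (2*m))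
      else 0)
    (lam : Fin (2*m+1) → F)
    (P : L → L)
    (hP : ∀ g : L, P g = (∑ i, (b.repr g i)^p * lam i) • b (Fin.last (2*m)))
    (Dlam : Submodule F (LieDerivation F L L))
    (hD : ∀ ψ : LieDerivation F L L, ψ ∈ Dlam ↔
      ∀ g : L, ψ (P g) = (fun x => ⁅x, g⁆)^[p-1] (ψ g))
    (Inn : Submodule F (LieDerivation F L L))
    (hInn : ∀ D : LieDerivation F L L, D ∈ Inn ↔ ∃ h : L, ∀ g : L, D g = ⁅h, g⁆) :
    Inn ≤ Dlam ∧
    (lam = 0 →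
      Module.finrank F (↥Dlam ⧸ Submodule.comap Dlam.subtype Inn) = 2*m^2 + m + 1) ∧
    (lam ≠ 0 →
      Module.finrank F (↥Dlam ⧸ Submodule.comap Dlam.subtype Inn) = 2*m^2 + m) :=
  heisenberg_restricted_H1_dim_p_gt_two_general F p hp2 m L b hb lam P hP Dlam hD Inn hInn
end

section
/- For every integer m ≥ 1 and every field F, the space of 2-coboundaries of the Heisenberg Lie algebra h_m with adjoint coefficients, i.e. the image of the map ψ ↦ d¹ψ from linear maps h_m → h_m to alternating bilinear maps, has dimension 2m² + m over F. -/
/-!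
Write `z = b (Fin.last (2*m))` for the central basis vector and `c` for the `z`-coordinate. A
coboundary `d ψ` is determined by the alternating form `c ∘ d ψ`: if that form vanishes, then
`c ⁅ψ z, x⁆ = 0` for all `x`, so `ψ z ∈ F z` because `(x, y) ↦ c ⁅x, y⁆` is nondegenerate off `z`;
then `d ψ` takes values in `F z` and is zero. Conversely, if `c ⁅y, w⁆ = y_i` for all `y`, the
rank-one map `x ↦ x_j • w` has `c ∘ d ψ = e_i ∧ e_j`. Hence `ψ ↦ c ∘ d ψ` identifies the
coboundaries with the alternating forms on `h_m`, a space of dimension `(2m+1).choose 2 = 2m² + m`.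
-/

section

open Module Submodule LieModule.Cohomology

namespace LieModule.Cohomology

variable {R L M N : Type*} [CommRing R] [LieRing L] [LieAlgebra R L]
  [AddCommGroup M] [Module R M] [AddCommGroup N] [Module R N]

lemma map_twoCochain_apply_eq_zero_of_basis_lt {ι : Type*} [LinearOrder ι] (b : Basis ι R L)
    (a : twoCochain R L M) (f : M →ₗ[R] N) (h : ∀ i j, i < j → f (a (b i) (b j)) = 0)
    (x y : L) : f (a x y) = 0 := by
  suffices a.val.compr₂ f = 0 from LinearMap.congr_fun₂ this x y
  refine b.ext fun i => b.ext fun j => ?_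
  rcases lt_trichotomy i j with hij | rfl | hji
  · exact h i j hij
  · simp
  · simp [← twoCochain_skew a (b j), h j i hji]

lemma coord_d₁₂_smulRight (c f : L →ₗ[R] R) {w : L} (hw : c w = 0) (x y : L) :
    c (d₁₂ R L L (f.smulRight w) x y) = f y * c ⁅x, w⁆ - f x * c ⁅y, w⁆ := by
  simp [hw, lie_smul]

lemma d₁₂_eq_zero_of_coord_eq_zero {z : L} {c : L →ₗ[R] R} (hcz : c z = 1)
    (hz : ∀ x : L, ⁅z, x⁆ = 0) (hL : ∀ x y : L, ⁅x, y⁆ ∈ R ∙ z)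
    (hc : ∀ y : L, (∀ x : L, c ⁅y, x⁆ = 0) → y ∈ R ∙ z) {ψ : L →ₗ[R] L}
    (h : ∀ x y, c (d₁₂ R L L ψ x y) = 0) : d₁₂ R L L ψ = 0 := by
  have hψz : ψ z ∈ R ∙ z := hc _ fun x => by simpa [hz] using h z x
  ext x y
  have hmem : d₁₂ R L L ψ x y ∈ R ∙ z := by
    obtain ⟨a, ha⟩ := mem_span_singleton.1 (hL x y)
    rw [d₁₂_apply_apply, ← ha, map_smul]
    exact sub_mem (sub_mem (hL _ _) (hL _ _)) (smul_mem _ _ hψz)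
  obtain ⟨a, ha⟩ := mem_span_singleton.1 hmem
  have ha0 := h x y
  rw [← ha, map_smul, hcz, smul_eq_mul, mul_one] at ha0
  simp [← ha, ha0]

end LieModule.Cohomology

variable {R L : Type*} [CommRing R] [LieRing L] [LieAlgebra R L]

noncomputable def Module.Basis.pairCoord {ι : Type*} [LinearOrder ι] (b : Basis ι R L)
    (c : L →ₗ[R] R) :
    (L → L → L) →ₗ[R] ({p : ι × ι // p.1 < p.2} → R) where
  toFun φ p := c (φ (b p.1.1) (b p.1.2))
  map_add' _ _ := by ext; simp
  map_smul' _ _ := by ext; simp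

def IsHeisenbergBasis_s9 {m : ℕ} (b : Basis (Fin (2*m+1)) R L) : Prop :=
  ∀ i j : Fin (2*m+1), ⁅b i, b j⁆ =
    if (j : ℕ) = (i : ℕ) + m ∧ (i : ℕ) < m then b (Fin.last (2*m))
    else if (i : ℕ) = (j : ℕ) + m ∧ (j : ℕ) < m then - b (Fin.last (2*m))
    else 0

namespace IsHeisenbergBasis_s9

variable {m : ℕ} {b : Basis (Fin (2*m+1)) R L}

lemma lie_last_left (hb : IsHeisenbergBasis_s9 b) (x : L) : ⁅b (Fin.last (2*m)), x⁆ = 0 := by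
  rw [← b.sum_repr x, lie_sum]
  refine Finset.sum_eq_zero fun j _ => ?_
  rw [lie_smul, hb, if_neg (by simp only [Fin.val_last]; omega),
    if_neg (by simp only [Fin.val_last]; omega), smul_zero]

lemma lie_mem_span_last (hb : IsHeisenbergBasis_s9 b) (x y : L) :
    ⁅x, y⁆ ∈ R ∙ b (Fin.last (2*m)) := by
  have hij : ∀ i j, ⁅b i, b j⁆ ∈ R ∙ b (Fin.last (2*m)) := fun i j => by
    rw [hb]
    split_ifs
    exacts [mem_span_singleton_self _, neg_mem (mem_span_singleton_self _), zero_mem _]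
  rw [← b.sum_repr x, ← b.sum_repr y]
  simp only [sum_lie, lie_sum, smul_lie, lie_smul]
  exact sum_mem fun j _ => smul_mem _ _ (sum_mem fun i _ => smul_mem _ _ (hij i j))

lemma exists_coord_lie_eq_coord (hb : IsHeisenbergBasis_s9 b) {i : Fin (2*m+1)}
    (hi : i ≠ Fin.last (2*m)) :
    ∃ w, b.coord (Fin.last (2*m)) w = 0 ∧ ∀ y, b.coord (Fin.last (2*m)) ⁅y, w⁆ = b.coord i y := by
  have hi' : (i : ℕ) < 2*m := Fin.val_lt_last hi
  suffices ∃ w, b.coord (Fin.last (2*m)) w = 0 ∧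
      ∀ j, b.coord (Fin.last (2*m)) ⁅b j, w⁆ = b.coord i (b j) from
    this.imp fun w hw => ⟨hw.1, fun y => by
      rw [← b.sum_repr y]
      simp only [sum_lie, smul_lie, map_sum, map_smul, hw.2]⟩
  by_cases him : (i : ℕ) < m
  · refine ⟨b ⟨i + m, by omega⟩, ?_, fun j => ?_⟩
    · simp [Finsupp.single_apply, Fin.ext_iff]; omega
    · rw [hb]
      split_ifs <;> simp_all [Finsupp.single_apply, Fin.ext_iff]
      omega
  · refine ⟨-b ⟨i - m, by omega⟩, ?_, fun j => ?_⟩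
    · simp [Finsupp.single_apply, Fin.ext_iff]; omega
    · rw [lie_neg, hb]
      split_ifs <;> simp_all [Finsupp.single_apply, Fin.ext_iff] <;> omega

lemma mem_span_last_of_coord_lie_eq_zero (hb : IsHeisenbergBasis_s9 b) {y : L}
    (hy : ∀ x, b.coord (Fin.last (2*m)) ⁅y, x⁆ = 0) : y ∈ R ∙ b (Fin.last (2*m)) := by
  have hcoord : ∀ i ≠ Fin.last (2*m), b.repr y i = 0 := fun i hi => by
    obtain ⟨w, -, hw⟩ := hb.exists_coord_lie_eq_coord hi
    rw [← b.coord_apply, ← hw, hy]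
  rw [← b.sum_repr y, Finset.sum_eq_single (Fin.last (2*m))
    (fun i _ hi => by rw [hcoord i hi, zero_smul]) (by simp)]
  exact smul_mem _ _ (mem_span_singleton_self _)

lemma d₁₂_eq_zero_of_pairCoord_eq_zero (hb : IsHeisenbergBasis_s9 b) {ψ : L →ₗ[R] L}
    (h : b.pairCoord (b.coord (Fin.last (2*m))) (fun x y => d₁₂ R L L ψ x y) = 0) :
    d₁₂ R L L ψ = 0 :=
  d₁₂_eq_zero_of_coord_eq_zero (by simp) hb.lie_last_left hb.lie_mem_span_last
    (fun _ => hb.mem_span_last_of_coord_lie_eq_zero)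
    (map_twoCochain_apply_eq_zero_of_basis_lt b _ _ fun i j hij => congrFun h ⟨(i, j), hij⟩)

lemma exists_pairCoord_d₁₂_eq_single (hb : IsHeisenbergBasis_s9 b)
    (p : {p : Fin (2*m+1) × Fin (2*m+1) // p.1 < p.2}) :
    ∃ ψ : L →ₗ[R] L,
      b.pairCoord (b.coord (Fin.last (2*m))) (fun x y => d₁₂ R L L ψ x y) = Pi.single p 1 := by
  obtain ⟨⟨i, j⟩, hij⟩ := p
  obtain ⟨w, hw0, hw⟩ := hb.exists_coord_lie_eq_coord (Fin.ne_last_of_lt hij)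
  refine ⟨(b.coord j).smulRight w, funext fun ⟨⟨k, l⟩, hkl⟩ => ?_⟩
  dsimp only at hij hkl hw
  simp only [Basis.pairCoord, LinearMap.coe_mk, AddHom.coe_mk]
  rw [coord_d₁₂_smulRight _ _ hw0, hw, hw]
  have hswap : ¬(k = j ∧ l = i) := fun ⟨hk, hl⟩ => lt_asymm hij (hk ▸ hl ▸ hkl)
  simp only [Basis.coord_apply, Basis.repr_self, Finsupp.single_apply, ite_zero_mul_ite_zero,
    if_neg hswap, Pi.single_apply, Subtype.mk.injEq, Prod.mk.injEq]
  simp [and_comm]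

lemma pairCoord_d₁₂_surjective (hb : IsHeisenbergBasis_s9 b) :
    Function.Surjective fun ψ : L →ₗ[R] L =>
      b.pairCoord (b.coord (Fin.last (2*m))) (fun x y => d₁₂ R L L ψ x y) := by
  intro g
  choose ψ hψ using hb.exists_pairCoord_d₁₂_eq_single
  refine ⟨∑ p, g p • ψ p, funext fun q => ?_⟩
  have hψq := fun p => congrFun (hψ p) q
  simp only [Basis.pairCoord, LinearMap.coe_mk, AddHom.coe_mk] at hψq ⊢
  simp only [map_sum, map_smul, ← twoCochain_val_apply, Submodule.coe_sum, Submodule.coe_smul,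
    LinearMap.sum_apply, LinearMap.smul_apply]
  simp only [twoCochain_val_apply, smul_eq_mul, hψq]
  simp [Pi.single_apply]

end IsHeisenbergBasis_s9

end

theorem heisenberg_two_coboundaries_dim_general
    (F : Type*) [Field F] (m : ℕ)
    (L : Type*) [LieRing L] [LieAlgebra F L]
    (b : Module.Basis (Fin (2*m+1)) F L)
    (hb : ∀ i j : Fin (2*m+1), ⁅b i, b j⁆ =
      if (j : ℕ) = (i : ℕ) + m ∧ (i : ℕ) < m then b (Fin.last (2*m))
      else if (i : ℕ) = (j : ℕ) + m ∧ (j : ℕ) < m then - b (Fin.last (2*m))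
      else 0)
    (B : Submodule F (L → L → L))
    (hB : ∀ φ : L → L → L, φ ∈ B ↔
      ∃ ψ : L →ₗ[F] L, ∀ x y : L, φ x y = ⁅x, ψ y⁆ - ⁅y, ψ x⁆ - ψ ⁅x, y⁆) :
    Module.finrank F ↥B = 2*m^2 + m := by
  have hb : IsHeisenbergBasis_s9 b := hb
  have hmem : ∀ φ, φ ∈ B ↔ ∃ ψ, (fun x y => LieModule.Cohomology.d₁₂ F L L ψ x y) = φ :=
    fun φ => by simp only [hB, funext_iff, LieModule.Cohomology.d₁₂_apply_apply, eq_comm]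
  let Φ := (b.pairCoord (b.coord (Fin.last (2*m)))).domRestrict B
  have hΦ : Function.Bijective Φ := by
    refine ⟨(injective_iff_map_eq_zero Φ).2 ?_, fun g => ?_⟩
    · rintro ⟨φ, hφ⟩ h
      obtain ⟨ψ, rfl⟩ := (hmem φ).1 hφ
      ext x y
      simp only [hb.d₁₂_eq_zero_of_pairCoord_eq_zero h]
      rfl
    · obtain ⟨ψ, rfl⟩ := hb.pairCoord_d₁₂_surjective g
      exact ⟨⟨_, (hmem _).2 ⟨ψ, rfl⟩⟩, rfl⟩
  rw [(LinearEquiv.ofBijective Φ hΦ).finrank_eq, Module.finrank_fintype_fun_eq_card,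
    Fintype.card_subtype, Fintype.card_product_filter_lt, Fintype.card_fin, Nat.choose_two_right,
    Nat.add_sub_cancel]
  exact Nat.div_eq_of_eq_mul_left two_pos (by ring)

/-- For every integer `m ≥ 1` and every field `F`, the space of
2-coboundaries of the Heisenberg Lie algebra `h_m` with adjoint coefficients, i.e. the
image of the map `ψ ↦ d¹ψ` (where `d¹ψ(x,y) = ⁅x,ψ y⁆ − ⁅y,ψ x⁆ − ψ⁅x,y⁆`) from linear
maps `h_m → h_m` to alternating bilinear maps, has dimension `2m² + m` over `F`. -/
theorem heisenberg_two_coboundaries_dim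
    (F : Type*) [Field F] (m : ℕ) (hm : 1 ≤ m)
    (L : Type*) [LieRing L] [LieAlgebra F L]
    (b : Module.Basis (Fin (2*m+1)) F L)
    (hb : ∀ i j : Fin (2*m+1), ⁅b i, b j⁆ =
      if (j : ℕ) = (i : ℕ) + m ∧ (i : ℕ) < m then b (Fin.last (2*m))
      else if (i : ℕ) = (j : ℕ) + m ∧ (j : ℕ) < m then - b (Fin.last (2*m))
      else 0)
    (B : Submodule F (L → L → L))
    (hB : ∀ φ : L → L → L, φ ∈ B ↔
      ∃ ψ : L →ₗ[F] L, ∀ x y : L, φ x y = ⁅x, ψ y⁆ - ⁅y, ψ x⁆ - ψ ⁅x, y⁆) :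
    Module.finrank F ↥B = 2*m^2 + m :=
  heisenberg_two_coboundaries_dim_general F m L b hb B hB
end

section
/- For m = 1 and every field F, the space of 2-cocycles of the Heisenberg Lie algebra h_1 with adjoint coefficients has dimension 8 over F. -/
/-!
An alternating bilinear map `φ` on `h_1 = span (b 0, b 1, b 2)` is determined by the triple
`(u, v, w) = (φ (b 0) (b 1), φ (b 0) (b 2), φ (b 1) (b 2))`, and every triple occurs, so the
2-cochains form a space of dimension `9`. Since `⁅x, y⁆ = (x₀ y₁ - x₁ y₀) • b 2`, the cocycle
identity at `(b 0, b 1, b 2)` reads `(v₀ + w₁) • b 2 = 0`, and a direct computation in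
coordinates shows that this single linear condition is also sufficient. Hence the cocycles
form a hyperplane, of dimension `8`.
-/

open Module

noncomputable section

namespace LinearMap

variable {R M N : Type*} [CommRing R] [AddCommGroup M] [Module R M] [AddCommGroup N] [Module R N]

def mk₂OfSMulAdd (φ : M → M → N)
    (h₁ : ∀ (a : R) (x x' y : M), φ (a • x + x') y = a • φ x y + φ x' y)
    (h₂ : ∀ (a : R) (x y y' : M), φ x (a • y + y') = a • φ x y + φ x y') :
    M →ₗ[R] M →ₗ[R] N :=
  have zero_left (y : M) : φ 0 y = 0 := by simpa using h₁ 1 0 0 y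
  have zero_right (x : M) : φ x 0 = 0 := by simpa using h₂ 1 x 0 0
  mk₂ R φ (fun x x' y => by simpa using h₁ 1 x x' y)
    (fun a x y => by simpa [zero_left] using h₁ a x 0 y)
    (fun x y y' => by simpa using h₂ 1 x y y')
    (fun a x y => by simpa [zero_right] using h₂ a x y 0)

end LinearMap

namespace Module.Basis

variable {ι R M : Type*} [CommRing R] [AddCommGroup M] [Module R M]

def wedgeCoord (b : Basis ι R M) (i j : ι) (x y : M) : R :=
  b.repr x i * b.repr y j - b.repr x j * b.repr y i

end Module.Basis

section FinThree

variable {R M N : Type*} [CommRing R] [AddCommGroup M] [Module R M] [AddCommGroup N] [Module R N]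
  (b : Basis (Fin 3) R M)

theorem LinearMap.IsAlt.apply_eq_wedgeCoord_fin_three {B : M →ₗ[R] M →ₗ[R] N} (hB : B.IsAlt)
    (x y : M) :
    B x y = b.wedgeCoord 0 1 x y • B (b 0) (b 1) + b.wedgeCoord 0 2 x y • B (b 0) (b 2)
      + b.wedgeCoord 1 2 x y • B (b 1) (b 2) := by
  conv_lhs => rw [← b.sum_repr x, ← b.sum_repr y]
  simp only [Fin.sum_univ_three, map_add, map_smul, LinearMap.add_apply, LinearMap.smul_apply,
    hB.self_eq_zero, ← hB.neg (b 0) (b 1), ← hB.neg (b 0) (b 2), ← hB.neg (b 1) (b 2),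
    Basis.wedgeCoord]
  module

def evalBasisPairs : (M → M → N) →ₗ[R] N × N × N where
  toFun φ := (φ (b 0) (b 1), φ (b 0) (b 2), φ (b 1) (b 2))
  map_add' _ _ := rfl
  map_smul' _ _ := rfl

def cochainOfValues (u v w : N) (x y : M) : N :=
  b.wedgeCoord 0 1 x y • u + b.wedgeCoord 0 2 x y • v + b.wedgeCoord 1 2 x y • w

theorem evalBasisPairs_cochainOfValues (u v w : N) :
    evalBasisPairs b (cochainOfValues b u v w) = (u, v, w) := by
  simp [evalBasisPairs, cochainOfValues, Basis.wedgeCoord]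

def heisenbergConstraint : M × M × M →ₗ[R] R :=
  b.coord 0 ∘ₗ LinearMap.fst R M M ∘ₗ LinearMap.snd R M (M × M)
    + b.coord 1 ∘ₗ LinearMap.snd R M M ∘ₗ LinearMap.snd R M (M × M)

@[simp]
theorem heisenbergConstraint_apply (u v w : M) :
    heisenbergConstraint b (u, v, w) = b.repr v 0 + b.repr w 1 :=
  rfl

end FinThree

theorem finrank_ker_heisenbergConstraint {F V : Type*} [Field F] [AddCommGroup V] [Module F V]
    (b : Basis (Fin 3) F V) : finrank F (LinearMap.ker (heisenbergConstraint b)) = 8 := by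
  have : FiniteDimensional F V := .of_basis b
  have hne : heisenbergConstraint b ≠ 0 := fun h => by
    simpa using LinearMap.congr_fun h (0, b 0, 0)
  have := Module.Dual.finrank_ker_add_one_of_ne_zero hne
  simp [finrank_prod, finrank_eq_card_basis b] at this
  omega

section TwoCocycle

variable (R : Type*) {L : Type*} [CommRing R] [LieRing L] [LieAlgebra R L]

def IsTwoCocycle (φ : L → L → L) : Prop :=
  (∀ (a : R) (x x' y : L), φ (a • x + x') y = a • φ x y + φ x' y) ∧
  (∀ (a : R) (x y y' : L), φ x (a • y + y') = a • φ x y + φ x y') ∧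
  (∀ x : L, φ x x = 0) ∧
  (∀ x y z : L, ⁅x, φ y z⁆ - ⁅y, φ x z⁆ + ⁅z, φ x y⁆
    - φ ⁅x, y⁆ z + φ ⁅x, z⁆ y - φ ⁅y, z⁆ x = 0)

variable {R} {φ : L → L → L}

def IsTwoCocycle.toLinearMap₂ (hφ : IsTwoCocycle R φ) : L →ₗ[R] L →ₗ[R] L :=
  LinearMap.mk₂OfSMulAdd φ hφ.1 hφ.2.1

theorem IsTwoCocycle.toLinearMap₂_isAlt (hφ : IsTwoCocycle R φ) : hφ.toLinearMap₂.IsAlt :=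
  hφ.2.2.1

theorem IsTwoCocycle.zero_left (hφ : IsTwoCocycle R φ) (y : L) : φ 0 y = 0 :=
  hφ.toLinearMap₂.map_zero₂ y

theorem IsTwoCocycle.apply_eq_wedgeCoord (hφ : IsTwoCocycle R φ) (b : Basis (Fin 3) R L)
    (x y : L) :
    φ x y = b.wedgeCoord 0 1 x y • φ (b 0) (b 1) + b.wedgeCoord 0 2 x y • φ (b 0) (b 2)
      + b.wedgeCoord 1 2 x y • φ (b 1) (b 2) :=
  hφ.toLinearMap₂_isAlt.apply_eq_wedgeCoord_fin_three b x y

theorem IsTwoCocycle.eq_zero_of_evalBasisPairs_eq_zero (hφ : IsTwoCocycle R φ)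
    {b : Basis (Fin 3) R L} (h : evalBasisPairs b φ = 0) : φ = 0 := by
  obtain ⟨h01, h02, h12⟩ : φ (b 0) (b 1) = 0 ∧ φ (b 0) (b 2) = 0 ∧ φ (b 1) (b 2) = 0 := by
    simpa [evalBasisPairs] using h
  ext x y : 2
  rw [hφ.apply_eq_wedgeCoord b x y, h01, h02, h12]
  simp

theorem injective_evalBasisPairs_comp_subtype (b : Basis (Fin 3) R L)
    {Z : Submodule R (L → L → L)} (hZ : ∀ φ, φ ∈ Z ↔ IsTwoCocycle R φ) :
    Function.Injective (evalBasisPairs b ∘ₗ Z.subtype) := by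
  rw [← LinearMap.ker_eq_bot, Submodule.eq_bot_iff]
  rintro ⟨φ, hφ⟩ hker
  exact Subtype.ext (((hZ φ).mp hφ).eq_zero_of_evalBasisPairs_eq_zero hker)

end TwoCocycle

section Heisenberg

variable {R L : Type*} [CommRing R] [LieRing L] [LieAlgebra R L] {b : Basis (Fin 3) R L}
  (h01 : ⁅b 0, b 1⁆ = b 2) (h02 : ⁅b 0, b 2⁆ = 0) (h12 : ⁅b 1, b 2⁆ = 0)
include h01 h02 h12

theorem lie_eq_wedgeCoord_smul (x y : L) : ⁅x, y⁆ = b.wedgeCoord 0 1 x y • b 2 := by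
  have hB : (LinearMap.mk₂ R (fun x y : L => ⁅x, y⁆) add_lie smul_lie lie_add lie_smul).IsAlt :=
    lie_self
  simpa [h01, h02, h12] using hB.apply_eq_wedgeCoord_fin_three b x y

theorem IsTwoCocycle.heisenbergConstraint_evalBasisPairs {φ : L → L → L}
    (hφ : IsTwoCocycle R φ) : heisenbergConstraint b (evalBasisPairs b φ) = 0 := by
  have hco := congrArg (b.repr · 2) (hφ.2.2.2 (b 0) (b 1) (b 2))
  simp only [h01, h02, h12, lie_eq_wedgeCoord_smul h01 h02 h12 (b _), hφ.2.2.1,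
    hφ.zero_left] at hco
  simpa [Basis.wedgeCoord, evalBasisPairs, add_comm] using hco

theorem isTwoCocycle_cochainOfValues {u v w : L} (h : heisenbergConstraint b (u, v, w) = 0) :
    IsTwoCocycle R (cochainOfValues b u v w) := by
  have hw : b.repr w 1 = -b.repr v 0 := eq_neg_of_add_eq_zero_right h
  refine ⟨fun a x x' y => ?_, fun a x y y' => ?_, fun x => ?_, fun x y z => ?_⟩
  · simp only [cochainOfValues, Basis.wedgeCoord, map_add, map_smul, Finsupp.add_apply,
      Finsupp.smul_apply, smul_eq_mul]
    module
  · simp only [cochainOfValues, Basis.wedgeCoord, map_add, map_smul, Finsupp.add_apply,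
      Finsupp.smul_apply, smul_eq_mul]
    module
  · simp only [cochainOfValues, Basis.wedgeCoord]
    module
  · simp only [cochainOfValues, lie_eq_wedgeCoord_smul h01 h02 h12, Basis.wedgeCoord, map_add,
      map_smul, Finsupp.add_apply, Finsupp.smul_apply, smul_eq_mul, Basis.repr_self,
      Finsupp.single_apply, Fin.reduceEq, if_false, if_true, hw]
    module

theorem range_evalBasisPairs_comp_subtype {Z : Submodule R (L → L → L)}
    (hZ : ∀ φ, φ ∈ Z ↔ IsTwoCocycle R φ) :
    LinearMap.range (evalBasisPairs b ∘ₗ Z.subtype) = LinearMap.ker (heisenbergConstraint b) := by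
  apply le_antisymm
  · rintro _ ⟨⟨φ, hφ⟩, rfl⟩
    exact ((hZ φ).mp hφ).heisenbergConstraint_evalBasisPairs h01 h02 h12
  · rintro ⟨u, v, w⟩ h
    exact ⟨⟨_, (hZ _).mpr (isTwoCocycle_cochainOfValues h01 h02 h12 h)⟩,
      evalBasisPairs_cochainOfValues b u v w⟩

end Heisenberg

end

/-- For `m = 1` and every field `F`, the space of 2-cocycles
of the Heisenberg Lie algebra `h_m` with adjoint coefficients (alternating bilinear maps
`φ : h_m × h_m → h_m` with
`⁅x,φ(y,z)⁆ − ⁅y,φ(x,z)⁆ + ⁅z,φ(x,y)⁆ − φ(⁅x,y⁆,z) + φ(⁅x,z⁆,y) − φ(⁅y,z⁆,x) = 0`)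
has dimension `8` over `F`. -/
theorem heisenberg_two_cocycles_dim_m_eq_one
    (F : Type*) [Field F] (m : ℕ) (hm : m = 1)
    (L : Type*) [LieRing L] [LieAlgebra F L]
    (b : Module.Basis (Fin (2*m+1)) F L)
    (hb : ∀ i j : Fin (2*m+1), ⁅b i, b j⁆ =
      if (j : ℕ) = (i : ℕ) + m ∧ (i : ℕ) < m then b (Fin.last (2*m))
      else if (i : ℕ) = (j : ℕ) + m ∧ (j : ℕ) < m then - b (Fin.last (2*m))
      else 0)
    (Z : Submodule F (L → L → L))
    (hZ : ∀ φ : L → L → L, φ ∈ Z ↔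
      (∀ (a : F) (x x' y : L), φ (a • x + x') y = a • φ x y + φ x' y) ∧
      (∀ (a : F) (x y y' : L), φ x (a • y + y') = a • φ x y + φ x y') ∧
      (∀ x : L, φ x x = 0) ∧
      (∀ x y z : L, ⁅x, φ y z⁆ - ⁅y, φ x z⁆ + ⁅z, φ x y⁆
        - φ ⁅x, y⁆ z + φ ⁅x, z⁆ y - φ ⁅y, z⁆ x = 0)) :
    Module.finrank F ↥Z = 8 := by
  subst hm
  have h01 : ⁅b 0, b 1⁆ = b 2 := by simpa using hb 0 1
  have h02 : ⁅b 0, b 2⁆ = 0 := by simpa using hb 0 2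
  have h12 : ⁅b 1, b 2⁆ = 0 := by simpa using hb 1 2
  calc finrank F Z = finrank F (LinearMap.range (evalBasisPairs b ∘ₗ Z.subtype)) :=
        (LinearEquiv.ofInjective _ (injective_evalBasisPairs_comp_subtype b hZ)).finrank_eq
    _ = 8 := by
      rw [range_evalBasisPairs_comp_subtype h01 h02 h12 hZ, finrank_ker_heisenbergConstraint]
end
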